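/- There exists a solvable MPP instance (G, R, x_I, x_G) such that no solution simultaneously attains the minimum total arrival time and the minimum total distance. -/

import Mathlib

/-!
Formalization of multi-robot path planning on graphs (MPP).

An MPP instance consists of a connected simple graph `G` on a vertex type `V`,
a finite set of robots (an index type `R`), and injective start/goal
configurations `xI xG : R → V`.  A scheduled path is a map `ℕ → V`.
-/

namespace MPPFormal

variable {V R : Type}

/-- The arrival time of a path `p` with goal `g`: the smallest time `t`
with `p t = g`. -/
noncomputable def arrivalTime (g : V) (p : ℕ → V) : ℕ := sInf {t | p t = g}

/-- A feasible scheduled path from `s` to `g` in the graph `G`: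
it starts at `s`, reaches `g` at some time, stays at `g` forever after the
first time it reaches `g`, and at every time step it either traverses an
edge of `G` or stays put. -/
def FeasiblePath (G : SimpleGraph V) (s g : V) (p : ℕ → V) : Prop :=
  p 0 = s ∧ (∃ t, p t = g) ∧ (∀ t, arrivalTime g p ≤ t → p t = g) ∧
    ∀ t, G.Adj (p t) (p (t + 1)) ∨ p t = p (t + 1)

/-- Two scheduled paths collide if they meet at the same vertex at the same
time, or if they swap along an edge head-on. -/
def Collide (p q : ℕ → V) : Prop :=
  (∃ t, p t = q t) ∨ ∃ t, p t = q (t + 1) ∧ p (t + 1) = q t ∧ p t ≠ p (t + 1)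

/-- The length of a scheduled path: the number of time steps at which it
actually moves. -/
noncomputable def pathLen (p : ℕ → V) : ℕ := Set.ncard {t | p t ≠ p (t + 1)}

/-- A solution to the MPP instance `(G, R, xI, xG)`: a family of pairwise
non-colliding feasible paths, one per robot. -/
def IsSolution (G : SimpleGraph V) (xI xG : R → V) (p : R → ℕ → V) : Prop :=
  (∀ i, FeasiblePath G (xI i) (xG i) (p i)) ∧
    Pairwise fun i j => ¬ Collide (p i) (p j)

/-- `(G, xI, xG)` together with the robot index type `R` forms an MPP
instance: the graph is connected and the start and goal configurations are
injective. -/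
def IsMPPInstance (G : SimpleGraph V) (xI xG : R → V) : Prop :=
  G.Connected ∧ Function.Injective xI ∧ Function.Injective xG

variable [Fintype R]

/-- Total arrival time of a solution. -/
noncomputable def totalTime (xG : R → V) (p : R → ℕ → V) : ℕ :=
  ∑ i, arrivalTime (xG i) (p i)

/-- Makespan (last arrival time) of a solution. -/
noncomputable def makespan (xG : R → V) (p : R → ℕ → V) : ℕ :=
  Finset.univ.sup fun i => arrivalTime (xG i) (p i)

/-- Total distance traveled in a solution. -/
noncomputable def totalDist (p : R → ℕ → V) : ℕ := ∑ i, pathLen (p i)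

/-- Maximum single-robot distance of a solution. -/
noncomputable def maxDist (p : R → ℕ → V) : ℕ :=
  Finset.univ.sup fun i => pathLen (p i)

/-- Minimum total arrival time over all solutions. -/
noncomputable def minTotalTime (G : SimpleGraph V) (xI xG : R → V) : ℕ :=
  sInf {c | ∃ p, IsSolution G xI xG p ∧ totalTime xG p = c}

/-- Minimum makespan over all solutions. -/
noncomputable def minMakespan (G : SimpleGraph V) (xI xG : R → V) : ℕ :=
  sInf {c | ∃ p, IsSolution G xI xG p ∧ makespan xG p = c}

/-- Minimum total distance over all solutions. -/
noncomputable def minTotalDist (G : SimpleGraph V) (xI xG : R → V) : ℕ :=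
  sInf {c | ∃ p, IsSolution G xI xG p ∧ totalDist p = c}

/-- Minimum maximum distance over all solutions. -/
noncomputable def minMaxDist (G : SimpleGraph V) (xI xG : R → V) : ℕ :=
  sInf {c | ∃ p, IsSolution G xI xG p ∧ maxDist p = c}

end MPPFormal

/-!
A 7-cycle `0 - 1 - 2 - 3 - 4 - 5 - 6 - 0` has a pendant vertex `7` at the hub `2`. Robot 0 goes
from `7` into the hub, robot 1 from `0` to `3`, either through the hub (3 moves) or around the
other side of the cycle (4 moves). Going around lets robot 0 step in at once (total time
`1 + 4 = 5`, total distance `5`); going through makes robot 0 wait until robot 1 has left the hub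
(total time `3 + 3 = 6`, total distance `4`). A solution of total distance `4` must send robot 1
through the hub, since avoiding it costs 4 moves, and then robot 0 cannot arrive before time 3.
Both lower bounds come from potentials on the vertices that grow by at most one per move.
-/

namespace MPPFormal

open Finset

variable {V : Type}

theorem Collide.symm {p q : ℕ → V} (h : Collide p q) : Collide q p := by
  rcases h with ⟨t, h⟩ | ⟨t, h₁, h₂, hmove⟩
  · exact .inl ⟨t, h.symm⟩
  · exact .inr ⟨t, h₂.symm, h₁.symm, by rwa [← h₁, ← h₂, ne_comm]⟩

section Moves

variable [DecidableEq V] {p : ℕ → V}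

theorem le_add_card_moves (ψ : V → ℕ)
    (hψ : ∀ t, p t ≠ p (t + 1) → ψ (p (t + 1)) ≤ ψ (p t) + 1) (n : ℕ) :
    ψ (p n) ≤ ψ (p 0) + #{t ∈ range n | p t ≠ p (t + 1)} := by
  induction n with
  | zero => simp
  | succ n ih =>
    rw [range_add_one, filter_insert]
    by_cases hmove : p n = p (n + 1)
    · rw [if_neg (not_not.2 hmove), ← hmove]
      exact ih
    · rw [if_pos hmove, card_insert_of_notMem (by simp)]
      linarith [hψ n hmove]

theorem pathLen_eq_card_moves {g : V} {N : ℕ} (hN : ∀ t, N ≤ t → p t = g) :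
    pathLen p = #{t ∈ range N | p t ≠ p (t + 1)} := by
  rw [pathLen, ← Set.ncard_coe_finset]
  congr 1
  ext t
  simp only [Set.mem_ofPred_eq, coe_filter, mem_range, iff_and_self]
  intro hmove
  by_contra! ht
  exact hmove (by rw [hN t ht, hN (t + 1) (by omega)])

end Moves

section FeasiblePath

variable {G : SimpleGraph V} {s g : V} {p : ℕ → V}

theorem FeasiblePath.apply_arrivalTime (hp : FeasiblePath G s g p) : p (arrivalTime g p) = g :=
  Nat.sInf_mem hp.2.1

theorem FeasiblePath.lt_arrivalTime (hp : FeasiblePath G s g p) {t : ℕ} (ht : p t ≠ g) :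
    t < arrivalTime g p :=
  lt_of_not_ge fun h => ht (hp.2.2.1 t h)

theorem FeasiblePath.adj_of_ne (hp : FeasiblePath G s g p) {t : ℕ} (hmove : p t ≠ p (t + 1)) :
    G.Adj (p t) (p (t + 1)) :=
  (hp.2.2.2 t).resolve_right hmove

variable [DecidableEq V] (ψ : V → ℕ)

theorem FeasiblePath.le_add_time (hp : FeasiblePath G s g p)
    (hψ : ∀ t, G.Adj (p t) (p (t + 1)) → ψ (p (t + 1)) ≤ ψ (p t) + 1) (n : ℕ) :
    ψ (p n) ≤ ψ s + n := by
  have := le_add_card_moves ψ (fun t hmove => hψ t (hp.adj_of_ne hmove)) n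
  rw [hp.1] at this
  exact this.trans (by grw [card_filter_le, card_range])

theorem FeasiblePath.le_add_pathLen (hp : FeasiblePath G s g p)
    (hψ : ∀ t, G.Adj (p t) (p (t + 1)) → ψ (p (t + 1)) ≤ ψ (p t) + 1) :
    ψ g ≤ ψ s + pathLen p := by
  have := le_add_card_moves ψ (fun t hmove => hψ t (hp.adj_of_ne hmove)) (arrivalTime g p)
  rwa [hp.1, hp.apply_arrivalTime, ← pathLen_eq_card_moves hp.2.2.1] at this

theorem FeasiblePath.pathLen_pos (hp : FeasiblePath G s g p) (hsg : s ≠ g) : 0 < pathLen p := by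
  have := hp.le_add_pathLen (fun v => if v = g then 1 else 0) fun t _ => by split_ifs <;> simp
  simp only [if_pos, if_neg hsg] at this
  omega

end FeasiblePath

def listPath (l : List V) (g : V) (t : ℕ) : V := l.getD t g

section listPath

variable {l : List V} {s g : V}

theorem listPath_of_length_le {t : ℕ} (ht : l.length ≤ t) : listPath l g t = g := by
  simp [listPath, ht]

theorem arrivalTime_listPath (hg : g ∉ l) : arrivalTime g (listPath l g) = l.length := by
  refine le_antisymm (Nat.sInf_le (listPath_of_length_le le_rfl))
    (le_csInf ⟨_, listPath_of_length_le le_rfl⟩ fun t (ht : listPath l g t = g) => ?_)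
  by_contra! hlt
  simp only [listPath, List.getD_eq_getElem?_getD, List.getElem?_eq_getElem hlt,
    Option.getD_some] at ht
  exact hg (ht ▸ List.getElem_mem hlt)

theorem feasiblePath_listPath {G : SimpleGraph V} (hg : g ∉ s :: l)
    (hstep : ∀ t < (s :: l).length,
      G.Adj (listPath (s :: l) g t) (listPath (s :: l) g (t + 1)) ∨
        listPath (s :: l) g t = listPath (s :: l) g (t + 1)) :
    FeasiblePath G s g (listPath (s :: l) g) := by
  refine ⟨rfl, ⟨_, listPath_of_length_le le_rfl⟩, fun t ht => listPath_of_length_le ?_,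
    fun t => ?_⟩
  · rwa [arrivalTime_listPath hg] at ht
  · rcases lt_or_ge t (s :: l).length with ht | ht
    · exact hstep t ht
    · exact .inr (by rw [listPath_of_length_le ht, listPath_of_length_le (by omega)])

theorem not_collide_listPath {l' : List V} {g' : V} (hg : g ≠ g')
    (h : ∀ t < max l.length l'.length, listPath l g t ≠ listPath l' g' t ∧
      (listPath l g t = listPath l' g' (t + 1) → listPath l g (t + 1) ≠ listPath l' g' t)) :
    ¬ Collide (listPath l g) (listPath l' g') := by
  rintro (⟨t, hmeet⟩ | ⟨t, h₁, h₂, hmove⟩)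
  · rcases lt_or_ge t (max l.length l'.length) with ht | ht
    · exact (h t ht).1 hmeet
    · rw [listPath_of_length_le (le_of_max_le_left ht),
        listPath_of_length_le (le_of_max_le_right ht)] at hmeet
      exact hg hmeet
  · rcases lt_or_ge t (max l.length l'.length) with ht | ht
    · exact (h t ht).2 h₁ h₂
    · rw [listPath_of_length_le (le_of_max_le_left ht),
        listPath_of_length_le (by have := le_of_max_le_left ht; omega)] at hmove
      exact hmove rfl

theorem pathLen_listPath [DecidableEq V] :
    pathLen (listPath l g) = #{t ∈ range l.length | listPath l g t ≠ listPath l g (t + 1)} :=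
  pathLen_eq_card_moves fun _ => listPath_of_length_le

end listPath

theorem isSolution_fin_two {G : SimpleGraph V} {xI xG : Fin 2 → V} {p : Fin 2 → ℕ → V}
    (h₀ : FeasiblePath G (xI 0) (xG 0) (p 0)) (h₁ : FeasiblePath G (xI 1) (xG 1) (p 1))
    (h₀₁ : ¬ Collide (p 0) (p 1)) : IsSolution G xI xG p := by
  refine ⟨Fin.forall_fin_two.2 ⟨h₀, h₁⟩, fun i j hij => ?_⟩
  fin_cases i <;> fin_cases j
  exacts [absurd rfl hij, h₀₁, fun h => h₀₁ h.symm, absurd rfl hij]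

section Optimum

variable {R : Type} [Fintype R] {G : SimpleGraph V} {xI xG : R → V} {p : R → ℕ → V}

theorem minTotalTime_le (hp : IsSolution G xI xG p) : minTotalTime G xI xG ≤ totalTime xG p :=
  Nat.sInf_le ⟨p, hp, rfl⟩

theorem minTotalDist_le (hp : IsSolution G xI xG p) : minTotalDist G xI xG ≤ totalDist p :=
  Nat.sInf_le ⟨p, hp, rfl⟩

end Optimum

def hubGraph : SimpleGraph (Fin 8) := SimpleGraph.fromRel fun u v =>
  (u.val, v.val) ∈ [(0, 1), (1, 2), (2, 3), (3, 4), (4, 5), (5, 6), (6, 0), (2, 7)]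

instance : DecidableRel hubGraph.Adj := fun u v =>
  inferInstanceAs (Decidable ((SimpleGraph.fromRel _).Adj u v))

theorem hubGraph_connected : hubGraph.Connected := by
  decide

def starts : Fin 2 → Fin 8 := ![7, 0]

def goals : Fin 2 → Fin 8 := ![2, 3]

def fastSolution : Fin 2 → ℕ → Fin 8 := ![listPath [7] 2, listPath [0, 6, 5, 4] 3]

def shortSolution : Fin 2 → ℕ → Fin 8 := ![listPath [7, 7, 7] 2, listPath [0, 1, 2] 3]

theorem isSolution_fastSolution : IsSolution hubGraph starts goals fastSolution :=
  isSolution_fin_two (feasiblePath_listPath (by decide) (by decide))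
    (feasiblePath_listPath (by decide) (by decide)) (not_collide_listPath (by decide) (by decide))

theorem isSolution_shortSolution : IsSolution hubGraph starts goals shortSolution :=
  isSolution_fin_two (feasiblePath_listPath (by decide) (by decide))
    (feasiblePath_listPath (by decide) (by decide)) (not_collide_listPath (by decide) (by decide))

theorem totalTime_fastSolution : totalTime goals fastSolution = 5 := by
  rw [totalTime, Fin.sum_univ_two]
  change arrivalTime 2 (listPath [7] 2) + arrivalTime 3 (listPath [0, 6, 5, 4] 3) = 5
  rw [arrivalTime_listPath (by decide), arrivalTime_listPath (by decide)]
  rfl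

theorem totalDist_shortSolution : totalDist shortSolution = 4 := by
  rw [totalDist, Fin.sum_univ_two]
  change pathLen (listPath [7, 7, 7] 2) + pathLen (listPath [0, 1, 2] 3) = 4
  rw [pathLen_listPath, pathLen_listPath]
  decide

def distFromZero : Fin 8 → ℕ := ![0, 1, 2, 3, 3, 2, 1, 3]

/-- The distance from `0` once the hub `2` is deleted; the values at `2` and `7` play no role. -/
def distFromZeroAvoidingHub : Fin 8 → ℕ := ![0, 1, 0, 4, 3, 2, 1, 0]

theorem distFromZero_adj :
    ∀ u v, hubGraph.Adj u v → distFromZero v ≤ distFromZero u + 1 := by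
  decide

theorem distFromZeroAvoidingHub_adj : ∀ u v, hubGraph.Adj u v → u ≠ 2 → v ≠ 2 →
    distFromZeroAvoidingHub v ≤ distFromZeroAvoidingHub u + 1 := by
  decide

theorem exists_eq_hub_of_pathLen_le_three {q : ℕ → Fin 8} (hq : FeasiblePath hubGraph 0 3 q)
    (hlen : pathLen q ≤ 3) : ∃ t, q t = 2 := by
  by_contra! havoid
  have := hq.le_add_pathLen distFromZeroAvoidingHub fun t hadj =>
    distFromZeroAvoidingHub_adj _ _ hadj (havoid t) (havoid (t + 1))
  change 4 ≤ 0 + pathLen q at this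
  omega

theorem six_le_totalTime_of_eq_hub {p : Fin 2 → ℕ → Fin 8}
    (hp : IsSolution hubGraph starts goals p) {t : ℕ} (ht : p 1 t = 2) :
    6 ≤ totalTime goals p := by
  have hA : FeasiblePath hubGraph 7 2 (p 0) := hp.1 0
  have hB : FeasiblePath hubGraph 0 3 (p 1) := hp.1 1
  have hB_two_le : 2 ≤ t := by
    have := hB.le_add_time distFromZero (fun _ hadj => distFromZero_adj _ _ hadj) t
    rw [ht] at this
    change 2 ≤ 0 + t at this
    omega
  have hB_late : t < arrivalTime 3 (p 1) := hB.lt_arrivalTime (by rw [ht]; decide)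
  -- Once robot 0 has entered the hub it stays there, so it would meet robot 1 at time `t`.
  have hA_late : t < arrivalTime 2 (p 0) := by
    by_contra! h
    exact hp.2 (by decide : (0 : Fin 2) ≠ 1) (.inl ⟨t, by rw [hA.2.2.1 t h, ht]⟩)
  rw [totalTime, Fin.sum_univ_two]
  change 6 ≤ arrivalTime 2 (p 0) + arrivalTime 3 (p 1)
  omega

theorem six_le_totalTime_of_totalDist_le_four {p : Fin 2 → ℕ → Fin 8}
    (hp : IsSolution hubGraph starts goals p) (hd : totalDist p ≤ 4) :
    6 ≤ totalTime goals p := by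
  have hA : 0 < pathLen (p 0) := (hp.1 0).pathLen_pos (by decide)
  rw [totalDist, Fin.sum_univ_two] at hd
  obtain ⟨t, ht⟩ := exists_eq_hub_of_pathLen_le_three (hp.1 1) (by omega)
  exact six_le_totalTime_of_eq_hub hp ht

/-- There exists a solvable MPP instance such that no solution simultaneously
attains the minimum total arrival time and the minimum total distance. -/
theorem pareto_totalTime_totalDist :
    ∃ (k : ℕ) (V : Type) (G : SimpleGraph V) (xI xG : Fin k → V),
      IsMPPInstance G xI xG ∧ (∃ p, IsSolution G xI xG p) ∧
      ¬ ∃ p, IsSolution G xI xG p ∧ totalTime xG p = minTotalTime G xI xG ∧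
        totalDist p = minTotalDist G xI xG := by
  refine ⟨2, Fin 8, hubGraph, starts, goals, ⟨hubGraph_connected, by decide, by decide⟩,
    ⟨_, isSolution_fastSolution⟩, ?_⟩
  rintro ⟨p, hp, htime, hdist⟩
  have htime_le : totalTime goals p ≤ 5 :=
    htime ▸ totalTime_fastSolution ▸ minTotalTime_le isSolution_fastSolution
  have hdist_le : totalDist p ≤ 4 :=
    hdist ▸ totalDist_shortSolution ▸ minTotalDist_le isSolution_shortSolution
  have := six_le_totalTime_of_totalDist_le_four hp hdist_le
  omega

end MPPFormal
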